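/- There exists a non-triangular special biserial bound quiver (Q,I) whose fundamental group π_1(Q,I) is isomorphic to Z × Z; in particular, the fundamental group of a special biserial bound quiver need not be free. -/

import Mathlib

open Classical

noncomputable section

/-- A finite quiver: finite sets of vertices and arrows with source and target maps. -/
structure FQuiver where
  V : Type
  A : Type
  [fintV : Fintype V]
  [decV : DecidableEq V]
  [fintA : Fintype A]
  [decA : DecidableEq A]
  src : A → V
  tgt : A → V

attribute [instance] FQuiver.fintV FQuiver.decV FQuiver.fintA FQuiver.decA

namespace FQuiver

variable {Q : FQuiver}

/-- Oriented paths in a quiver. -/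
inductive Path (Q : FQuiver) : Q.V → Q.V → Type
  | nil (v : Q.V) : Path Q v v
  | cons (a : Q.A) {w : Q.V} (p : Path Q (Q.tgt a) w) : Path Q (Q.src a) w

/-- Composition (concatenation) of paths. -/
def Path.comp : ∀ {u v w : Q.V}, Path Q u v → Path Q v w → Path Q u w
  | _, _, _, .nil _, q => q
  | _, _, _, .cons a p, q => .cons a (Path.comp p q)

/-- Length of a path. -/
def Path.length : ∀ {u v : Q.V}, Path Q u v → ℕ
  | _, _, .nil _ => 0
  | _, _, .cons _ p => Path.length p + 1

/-- The list of arrows of a path, in order. -/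
def Path.arrows : ∀ {u v : Q.V}, Path Q u v → List Q.A
  | _, _, .nil _ => []
  | _, _, .cons a p => a :: Path.arrows p

/-- An arrow regarded as a path of length one. -/
def arrow (Q : FQuiver) (a : Q.A) : Path Q (Q.src a) (Q.tgt a) := .cons a (.nil _)

/-- Power of an oriented cycle. -/
def Path.pow {x : Q.V} (c : Path Q x x) : ℕ → Path Q x x
  | 0 => .nil x
  | n + 1 => c.comp (Path.pow c n)

/-- Transport a path along equalities of its endpoints. -/
def Path.cast {u u' v v' : Q.V} (hu : u = u') (hv : v = v') (p : Path Q u v) :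
    Path Q u' v' := by subst hu; subst hv; exact p

/-- The length-two path `ab` formed by two composable arrows. -/
def comp2 (a b : Q.A) (h : Q.src b = Q.tgt a) : Path Q (Q.src a) (Q.tgt b) :=
  (arrow Q a).comp ((arrow Q b).cast h rfl)

/-- The set of all paths of a quiver, bundled with their endpoints. -/
def PathsSigma (Q : FQuiver) : Type := Σ (u : Q.V) (v : Q.V), Path Q u v

/-- The underlying vector space of the path algebra `kQ`: the free `k`-module on paths. -/
abbrev PAlg (k : Type) [Field k] (Q : FQuiver) : Type := PathsSigma Q →₀ k

/-- The basis vector of `kQ` corresponding to a path. -/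
def pvec (k : Type) [Field k] {u v : Q.V} (p : Path Q u v) : PAlg k Q :=
  Finsupp.single ⟨u, v, p⟩ 1

/-- Left multiplication of an element of `kQ` by a path. -/
def lmul (k : Type) [Field k] {u v : Q.V} (p : Path Q u v) (x : PAlg k Q) : PAlg k Q :=
  x.sum fun s c => if h : s.1 = v then c • pvec k (p.comp ((Sigma.snd (Sigma.snd s)).cast h rfl)) else 0

/-- Right multiplication of an element of `kQ` by a path. -/
def rmul (k : Type) [Field k] {u v : Q.V} (x : PAlg k Q) (p : Path Q u v) : PAlg k Q :=
  x.sum fun s c => if h : s.2.1 = u then c • pvec k (Path.comp ((Sigma.snd (Sigma.snd s)).cast rfl h) p) else 0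

/-- The two-sided ideal of `kQ` generated by a set of elements. -/
def idealGen (k : Type) [Field k] (Q : FQuiver) (s : Set (PAlg k Q)) : Submodule k (PAlg k Q) :=
  sInf {M : Submodule k (PAlg k Q) |
    s ⊆ (M : Set (PAlg k Q)) ∧
    ∀ (u v : Q.V) (p : Path Q u v) (x : PAlg k Q), x ∈ M → lmul k p x ∈ M ∧ rmul k x p ∈ M}

/-- An admissible (two-sided) ideal `(kQ⁺)ᵐ ⊆ I ⊆ (kQ⁺)²` of the path algebra. -/
structure AdmissibleIdeal (k : Type) [Field k] (Q : FQuiver) where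
  I : Submodule k (PAlg k Q)
  lmul_mem : ∀ {u v : Q.V} (p : Path Q u v) {x : PAlg k Q}, x ∈ I → lmul k p x ∈ I
  rmul_mem : ∀ {u v : Q.V} (p : Path Q u v) {x : PAlg k Q}, x ∈ I → rmul k x p ∈ I
  bound : ℕ
  two_le_bound : 2 ≤ bound
  pow_le : ∀ {u v : Q.V} (p : Path Q u v), bound ≤ p.length → pvec k p ∈ I
  le_sq : ∀ x ∈ I, ∀ s ∈ x.support, 2 ≤ (Sigma.snd (Sigma.snd s)).length

/-- A special biserial bound quiver `(Q, I)`. -/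
structure SpecialBiserial (k : Type) [Field k] (Q : FQuiver) extends AdmissibleIdeal k Q where
  src_card : ∀ v : Q.V, Fintype.card {a : Q.A // Q.src a = v} ≤ 2
  tgt_card : ∀ v : Q.V, Fintype.card {a : Q.A // Q.tgt a = v} ≤ 2
  unique_succ : ∀ (a b c : Q.A) (hb : Q.src b = Q.tgt a) (hc : Q.src c = Q.tgt a),
      pvec k (comp2 a b hb) ∉ I → pvec k (comp2 a c hc) ∉ I → b = c
  unique_pred : ∀ (a b c : Q.A) (hb : Q.tgt b = Q.src a) (hc : Q.tgt c = Q.src a),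
      pvec k (comp2 b a hb.symm) ∉ I → pvec k (comp2 c a hc.symm) ∉ I → b = c

/-- A binomial relation `u - λv ∈ I` between distinct parallel paths not in `I`. -/
structure BinRel {k : Type} [Field k] {Q : FQuiver} (J : AdmissibleIdeal k Q) where
  s : Q.V
  t : Q.V
  u : Path Q s t
  v : Path Q s t
  coef : k
  coef_ne : coef ≠ 0
  u_ne_v : u ≠ v
  u_not_mem : pvec k u ∉ J.I
  v_not_mem : pvec k v ∉ J.I
  rel_mem : pvec k u - coef • pvec k v ∈ J.I

/-- `I` is generated by a set of paths (monomial relations) together with the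
binomial relations in `R`. -/
def Generates {k : Type} [Field k] {Q : FQuiver} (J : AdmissibleIdeal k Q)
    (R : Set (BinRel J)) : Prop :=
  ∃ P : Set (PathsSigma Q),
    (∀ s ∈ P, pvec k (Sigma.snd (Sigma.snd s)) ∈ J.I) ∧
    J.I = idealGen k Q
      (((fun s : PathsSigma Q => pvec k (Sigma.snd (Sigma.snd s))) '' P) ∪
       ((fun r : BinRel J => pvec k r.u - r.coef • pvec k r.v) '' R))

/-- The ideal `S ⊆ A = kQ/I`: the span of the residue classes of the paths occurring
in the binomial relations of `R`. -/
def Smod {k : Type} [Field k] {Q : FQuiver} (J : AdmissibleIdeal k Q) (R : Set (BinRel J)) :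
    Submodule k (PAlg k Q ⧸ J.I) :=
  Submodule.span k
    ((fun r : BinRel J => (Submodule.Quotient.mk (pvec k r.u) : PAlg k Q ⧸ J.I)) '' R)

/-- Number of connected components of the underlying graph of `Q`. -/
def numComponents (Q : FQuiver) : ℕ :=
  Nat.card (Quot (fun u v : Q.V => ∃ a : Q.A, Q.src a = u ∧ Q.tgt a = v))

/-- A quiver is acyclic (triangular) if it has no nontrivial oriented cycle. -/
def Acyclic (Q : FQuiver) : Prop := ∀ (x : Q.V) (p : Path Q x x), p.length = 0

/-- A simple cycle: a nontrivial oriented cycle visiting no vertex twice. -/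
def IsSimpleCycle {x : Q.V} (p : Path Q x x) : Prop :=
  p.length ≠ 0 ∧ (p.arrows.map Q.src).Nodup

/-- `dim_k S = χ(Q)`, written additively: `dim S + |Q₀| = |Q₁| + N`. -/
def EulerEq {k : Type} [Field k] {Q : FQuiver} (J : AdmissibleIdeal k Q)
    (R : Set (BinRel J)) : Prop :=
  Module.finrank k ↥(Smod J R) + Fintype.card Q.V = Fintype.card Q.A + numComponents Q

/-- The word in the free group on the arrows determined by a path. -/
def pathWord (Q : FQuiver) {u v : Q.V} (p : Path Q u v) : FreeGroup Q.A :=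
  (p.arrows.map FreeGroup.of).prod

/-- `T` is a spanning tree of (the underlying graph of) `Q`. -/
def IsSpanningTree (Q : FQuiver) (T : Set Q.A) : Prop :=
  (∀ u v : Q.V,
      Quot.mk (fun a b : Q.V => ∃ e ∈ T, Q.src e = a ∧ Q.tgt e = b) u =
      Quot.mk (fun a b : Q.V => ∃ e ∈ T, Q.src e = a ∧ Q.tgt e = b) v) ∧
  Nat.card T + 1 = Fintype.card Q.V

/-- The fundamental group of the bound quiver `(Q, I)` (for connected `Q`,
with respect to a spanning tree `T`): the free group on the arrows modulo the
tree arrows and the homotopy relations coming from the binomial relations. -/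
abbrev pi1 {k : Type} [Field k] {Q : FQuiver} (J : AdmissibleIdeal k Q)
    (T : Set Q.A) (R : Set (BinRel J)) : Type :=
  FreeGroup Q.A ⧸ Subgroup.normalClosure
    ((FreeGroup.of '' T) ∪
     ((fun r : BinRel J => pathWord Q r.u * (pathWord Q r.v)⁻¹) '' R))

end FQuiver

/-!
The witness is the one-vertex quiver with two loops `a = false`, `b = true` and
`I = (a², b², ab - ba)`, whose algebra is the exterior algebra on two generators. Its only
binomial relation `ab = ba` presents `π₁(Q, I)` as `⟨a, b ∣ [a, b]⟩ ≅ ℤ × ℤ`, which is abelian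
but not cyclic, whereas a commutative free group is cyclic.

That `ab` and `ba` survive in `kQ/I` is seen on the subspace of elements of length `≥ 2` whose
`ab`- and `ba`-coefficients add up to zero: multiplying by a nontrivial path pushes everything
into length `≥ 3`, so this subspace is an ideal, and it contains the generators of `I`.
-/

open scoped commutatorElement

namespace FreeGroup

theorem subsingleton_of_commute {ι : Type*} (h : ∀ g g' : FreeGroup ι, Commute g g') :
    Subsingleton ι := by
  refine ⟨fun x y => by_contra fun hxy => ?_⟩
  let f : FreeGroup ι →* Equiv.Perm (Fin 3) :=
    FreeGroup.lift fun z => if z = x then Equiv.swap 0 1 else if z = y then Equiv.swap 1 2 else 1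
  have := (h (of x) (of y)).map f
  simp only [f, lift_apply_of, if_true, if_neg (Ne.symm hxy)] at this
  exact absurd this.eq (by decide)

theorem isCyclic_of_commute {ι : Type*} (h : ∀ g g' : FreeGroup ι, Commute g g') :
    IsCyclic (FreeGroup ι) := by
  have := subsingleton_of_commute h
  cases isEmpty_or_nonempty ι
  · infer_instance
  · have := uniqueOfSubsingleton (Classical.arbitrary ι)
    infer_instance

abbrev commutatorQuotient : Type := FreeGroup Bool ⧸ Subgroup.normalClosure {⁅of false, of true⁆}

theorem commute_mk_of_false_of_true :
    Commute (QuotientGroup.mk (of false) : commutatorQuotient) (QuotientGroup.mk (of true)) :=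
  commutatorElement_eq_one_iff_commute.1
    ((QuotientGroup.eq_one_iff _).2 (Subgroup.subset_normalClosure rfl))

def commutatorQuotientToIntProd : commutatorQuotient →* Multiplicative (ℤ × ℤ) :=
  QuotientGroup.lift _ (FreeGroup.lift fun b => .ofAdd (cond b (0, 1) (1, 0)))
    (Subgroup.normalClosure_le_normal <| by
      simp [map_commutatorElement, commutatorElement_eq_one_iff_commute, Commute.all])

def intProdToCommutatorQuotient : Multiplicative (ℤ × ℤ) →* commutatorQuotient :=
  (MonoidHom.noncommCoprod (zpowersHom commutatorQuotient (QuotientGroup.mk (of false)))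
      (zpowersHom commutatorQuotient (QuotientGroup.mk (of true)))
      fun m n => commute_mk_of_false_of_true.zpow_zpow m.toAdd n.toAdd).comp
    (MulEquiv.prodMultiplicative (G := ℤ) (H := ℤ)).toMonoidHom

theorem intProdToCommutatorQuotient_ofAdd (p : ℤ × ℤ) :
    intProdToCommutatorQuotient (.ofAdd p) =
      QuotientGroup.mk (of false) ^ p.1 * QuotientGroup.mk (of true) ^ p.2 :=
  rfl

def commutatorQuotientEquiv : commutatorQuotient ≃* Multiplicative (ℤ × ℤ) :=
  MonoidHom.toMulEquiv commutatorQuotientToIntProd intProdToCommutatorQuotient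
    (QuotientGroup.monoidHom_ext _ <| FreeGroup.ext_hom _ _ fun b => by
      cases b <;> simp [commutatorQuotientToIntProd, intProdToCommutatorQuotient_ofAdd])
    (MonoidHom.ext fun x => Multiplicative.toAdd.injective <| by
      rw [← ofAdd_toAdd x, MonoidHom.comp_apply, intProdToCommutatorQuotient_ofAdd]
      simp [commutatorQuotientToIntProd])

end FreeGroup

theorem not_nonempty_intProd_mulEquiv_freeGroup (ι : Type*) :
    ¬ Nonempty (Multiplicative (ℤ × ℤ) ≃* FreeGroup ι) := by
  rintro ⟨e⟩
  have hcomm : ∀ g g' : FreeGroup ι, Commute g g' := fun g g' => by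
    simpa using (Commute.all (e.symm g) (e.symm g')).map e
  have := FreeGroup.isCyclic_of_commute hcomm
  rw [← e.isCyclic, isCyclic_multiplicative_iff] at this
  exact not_isAddCyclic_prod_of_infinite_nontrivial ℤ ℤ this

namespace FQuiver

variable {k : Type} [Field k] {Q : FQuiver}

theorem Path.length_comp {u v w : Q.V} (p : Path Q u v) (q : Path Q v w) :
    (p.comp q).length = p.length + q.length := by
  induction p with
  | nil => simp [Path.comp, Path.length]
  | cons a p ih => simp only [Path.comp, Path.length, ih]; omega

theorem Path.comp_nil {u v : Q.V} (p : Path Q u v) : p.comp (.nil v) = p := by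
  induction p with
  | nil => rfl
  | cons a p ih => rw [Path.comp, ih]

theorem Path.length_cast {u u' v v' : Q.V} (hu : u = u') (hv : v = v') (p : Path Q u v) :
    (p.cast hu hv).length = p.length := by
  subst hu hv; rfl

theorem pvec_cast {u u' v v' : Q.V} (hu : u = u') (hv : v = v') (p : Path Q u v) :
    pvec k (p.cast hu hv) = pvec k p := by
  subst hu hv; rfl

theorem lmul_pvec {u v w : Q.V} (p : Path Q u v) (q : Path Q v w) :
    lmul k p (pvec k q) = pvec k (p.comp q) := by
  refine (Finsupp.sum_single_index ?_).trans ?_ <;> simp [Path.cast]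

theorem rmul_pvec {u v w : Q.V} (q : Path Q u v) (p : Path Q v w) :
    rmul k (pvec k q) p = pvec k (q.comp p) := by
  refine (Finsupp.sum_single_index ?_).trans ?_ <;> simp [Path.cast]

theorem rmul_sub {u v : Q.V} (x y : PAlg k Q) (p : Path Q u v) :
    rmul k (x - y) p = rmul k x p - rmul k y p :=
  Finsupp.sum_sub_index fun _ _ _ => by split_ifs <;> simp [sub_smul]

theorem lmul_nil [Subsingleton Q.V] (v : Q.V) (x : PAlg k Q) : lmul k (.nil v) x = x := by
  conv_rhs => rw [← Finsupp.sum_single x]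
  refine Finsupp.sum_congr fun s _ => ?_
  rw [dif_pos (Subsingleton.elim _ _), Path.comp, pvec_cast]
  exact Finsupp.smul_single_one _ _

theorem rmul_nil [Subsingleton Q.V] (v : Q.V) (x : PAlg k Q) : rmul k x (.nil v) = x := by
  conv_rhs => rw [← Finsupp.sum_single x]
  refine Finsupp.sum_congr fun s _ => ?_
  rw [dif_pos (Subsingleton.elim _ _), Path.comp_nil, pvec_cast]
  exact Finsupp.smul_single_one _ _

def IsPathIdeal (M : Submodule k (PAlg k Q)) : Prop :=
  ∀ (u v : Q.V) (p : Path Q u v) (x : PAlg k Q), x ∈ M → lmul k p x ∈ M ∧ rmul k x p ∈ M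

theorem subset_idealGen (s : Set (PAlg k Q)) : s ⊆ idealGen k Q s :=
  fun _ hx => Submodule.mem_sInf.2 fun _ hM => hM.1 hx

theorem isPathIdeal_idealGen (s : Set (PAlg k Q)) : IsPathIdeal (idealGen k Q s) :=
  fun u v p x hx => by
    simp only [idealGen, Submodule.mem_sInf] at hx ⊢
    exact ⟨fun M hM => (hM.2 u v p x (hx M hM)).1, fun M hM => (hM.2 u v p x (hx M hM)).2⟩

theorem idealGen_le {s : Set (PAlg k Q)} {M : Submodule k (PAlg k Q)} (hs : s ⊆ M)
    (hM : IsPathIdeal M) : idealGen k Q s ≤ M :=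
  sInf_le ⟨hs, hM⟩

variable (k Q) in
def lengthGE (n : ℕ) : Submodule k (PAlg k Q) :=
  Finsupp.supported k k {s | n ≤ s.2.2.length}

theorem lmul_mem_lengthGE {n : ℕ} {u v : Q.V} (p : Path Q u v) {x : PAlg k Q}
    (hx : x ∈ lengthGE k Q n) : lmul k p x ∈ lengthGE k Q (p.length + n) := by
  refine Submodule.finsuppSum_mem _ _ _ _ fun s hs => ?_
  split_ifs with h
  · refine Submodule.smul_mem _ _ (Finsupp.single_mem_supported k 1 ?_)
    have : n ≤ s.2.2.length := (Finsupp.mem_supported k x).1 hx (Finsupp.mem_support_iff.2 hs)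
    show _ ≤ (Path.comp _ _).length
    rw [Path.length_comp, Path.length_cast]
    omega
  · exact zero_mem _

theorem rmul_mem_lengthGE {n : ℕ} {u v : Q.V} (p : Path Q u v) {x : PAlg k Q}
    (hx : x ∈ lengthGE k Q n) : rmul k x p ∈ lengthGE k Q (n + p.length) := by
  refine Submodule.finsuppSum_mem _ _ _ _ fun s hs => ?_
  split_ifs with h
  · refine Submodule.smul_mem _ _ (Finsupp.single_mem_supported k 1 ?_)
    have : n ≤ s.2.2.length := (Finsupp.mem_supported k x).1 hx (Finsupp.mem_support_iff.2 hs)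
    show _ ≤ (Path.comp _ _).length
    rw [Path.length_comp, Path.length_cast]
    omega
  · exact zero_mem _

theorem lengthGE_anti : Antitone (lengthGE k Q) :=
  fun _ _ h => Finsupp.supported_mono fun _ hs => le_trans h hs

abbrev twoLoops : FQuiver := { V := Unit, A := Bool, src := fun _ => (), tgt := fun _ => () }

namespace twoLoops

def pathOf : List Bool → Path twoLoops () ()
  | [] => Path.nil (Q := twoLoops) ()
  | x :: l => Path.cons (Q := twoLoops) x (pathOf l)

theorem arrows_pathOf (l : List Bool) : (pathOf l).arrows = l := by
  induction l with
  | nil => rfl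
  | cons x l ih => simp only [pathOf, Path.arrows, ih]

theorem pathOf_arrows {u v : twoLoops.V} (p : Path twoLoops u v) : pathOf p.arrows = p := by
  induction p with
  | nil => rfl
  | cons a p ih => simp only [Path.arrows, pathOf, ih]

theorem pathOf_injective : Function.Injective pathOf :=
  Function.LeftInverse.injective arrows_pathOf

theorem length_pathOf (l : List Bool) : (pathOf l).length = l.length := by
  induction l with
  | nil => rfl
  | cons x l ih => simp only [pathOf, Path.length, ih, List.length_cons]

theorem pathOf_append (l l' : List Bool) : pathOf (l ++ l') = (pathOf l).comp (pathOf l') := by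
  induction l with
  | nil => rfl
  | cons x l ih => simp only [List.cons_append, pathOf, ih, Path.comp]

def sigmaOf (l : List Bool) : PathsSigma twoLoops := ⟨(), (), pathOf l⟩

theorem sigmaOf_injective : Function.Injective sigmaOf := fun l l' h => by
  simpa [sigmaOf, arrows_pathOf] using congrArg (fun s : PathsSigma twoLoops => s.2.2.arrows) h

theorem pvec_pathOf (l : List Bool) : pvec k (pathOf l) = Finsupp.single (sigmaOf l) 1 :=
  rfl

theorem pvec_pathOf_apply (l l' : List Bool) :
    pvec k (pathOf l) (sigmaOf l') = if l = l' then 1 else 0 := by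
  simp [pvec_pathOf, Finsupp.single_apply, sigmaOf_injective.eq_iff]

variable (k) in
def rels : Set (PAlg k twoLoops) :=
  {pvec k (pathOf [false, false]), pvec k (pathOf [true, true]),
    pvec k (pathOf [false, true]) - pvec k (pathOf [true, false])}

variable (k) in
abbrev ideal : Submodule k (PAlg k twoLoops) := idealGen k twoLoops (rels k)

theorem pvec_sq_mem (x : Bool) : pvec k (pathOf [x, x]) ∈ ideal k :=
  subset_idealGen _ (by cases x <;> simp [rels])

theorem pvec_sub_pvec_swap_mem (x y : Bool) :
    pvec k (pathOf [x, y]) - pvec k (pathOf [y, x]) ∈ ideal k := by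
  cases x <;> cases y
  · simp
  · exact subset_idealGen _ (by simp [rels])
  · rw [← neg_sub]
    exact neg_mem (subset_idealGen _ (by simp [rels]))
  · simp

theorem pvec_mem_of_sq (x : Bool) (t : List Bool) : pvec k (pathOf (x :: x :: t)) ∈ ideal k := by
  have := (isPathIdeal_idealGen _ () () (pathOf t) _ (pvec_sq_mem (k := k) x)).2
  rwa [rmul_pvec, ← pathOf_append] at this

theorem pvec_mem_of_cons_sq (y x : Bool) (t : List Bool) :
    pvec k (pathOf (y :: x :: x :: t)) ∈ ideal k := by
  have := (isPathIdeal_idealGen _ () () (pathOf [y]) _ (pvec_mem_of_sq (k := k) x t)).1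
  rwa [lmul_pvec, ← pathOf_append] at this

theorem pvec_mem_of_length_three (x y z : Bool) (t : List Bool) :
    pvec k (pathOf (x :: y :: z :: t)) ∈ ideal k := by
  by_cases hxy : x = y
  · subst hxy
    exact pvec_mem_of_sq x _
  by_cases hyz : y = z
  · subst hyz
    exact pvec_mem_of_cons_sq x y t
  have : z = x := by cases x <;> cases y <;> cases z <;> simp_all
  subst z
  -- `xyxt = (xy - yx) xt + yxxt`
  have := add_mem (isPathIdeal_idealGen _ () () (pathOf (x :: t)) _
    (pvec_sub_pvec_swap_mem (k := k) x y)).2 (pvec_mem_of_cons_sq y x t)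
  rw [rmul_sub, rmul_pvec, rmul_pvec, ← pathOf_append, ← pathOf_append] at this
  simpa only [List.cons_append, List.nil_append, sub_add_cancel] using this

theorem pvec_mem_of_three_le_length {u v : twoLoops.V} (p : Path twoLoops u v)
    (hp : 3 ≤ p.length) : pvec k p ∈ ideal k := by
  rw [← pathOf_arrows p, length_pathOf] at hp
  rw [← pathOf_arrows p]
  rcases hl : p.arrows with _ | ⟨x, _ | ⟨y, _ | ⟨z, t⟩⟩⟩
  all_goals simp only [hl, List.length_cons, List.length_nil] at hp
  · omega
  · omega
  · omega
  · exact pvec_mem_of_length_three x y z t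

variable (k) in
def balanced : Submodule k (PAlg k twoLoops) :=
  lengthGE k twoLoops 2 ⊓ LinearMap.ker
    (Finsupp.lapply (sigmaOf [false, true]) + Finsupp.lapply (sigmaOf [true, false]))

theorem mem_balanced {x : PAlg k twoLoops} :
    x ∈ balanced k ↔ x ∈ lengthGE k twoLoops 2 ∧
      x (sigmaOf [false, true]) + x (sigmaOf [true, false]) = 0 :=
  Iff.rfl

theorem pvec_pathOf_mem_lengthGE (l : List Bool) :
    pvec k (pathOf l) ∈ lengthGE k twoLoops l.length :=
  Finsupp.single_mem_supported k 1 (length_pathOf l).ge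

theorem rels_subset_balanced : rels k ⊆ balanced k := by
  rintro x (rfl | rfl | rfl) <;> refine mem_balanced.2 ⟨?_, ?_⟩
  all_goals first
    | exact sub_mem (pvec_pathOf_mem_lengthGE _) (pvec_pathOf_mem_lengthGE _)
    | exact pvec_pathOf_mem_lengthGE _
    | simp [pvec_pathOf_apply]

theorem lengthGE_three_le_balanced : lengthGE k twoLoops 3 ≤ balanced k := by
  intro x hx
  have hzero : ∀ l : List Bool, l.length = 2 → x (sigmaOf l) = 0 := fun l hl =>
    (Finsupp.mem_supported' k x).1 hx _ fun h => by
      have : 3 ≤ (pathOf l).length := h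
      rw [length_pathOf] at this
      omega
  exact mem_balanced.2 ⟨lengthGE_anti (by norm_num) hx,
    by rw [hzero _ rfl, hzero _ rfl, add_zero]⟩

theorem isPathIdeal_balanced : IsPathIdeal (balanced k) := by
  intro u v p x hx
  cases p with
  | nil => rw [lmul_nil, rmul_nil]; exact ⟨hx, hx⟩
  | cons a p =>
    have hx2 := (mem_balanced.1 hx).1
    have hlen : 3 ≤ (Path.cons a p).length + 2 := by simp only [Path.length]; omega
    exact ⟨lengthGE_three_le_balanced (lengthGE_anti hlen (lmul_mem_lengthGE _ hx2)),
      lengthGE_three_le_balanced (lengthGE_anti (by omega) (rmul_mem_lengthGE _ hx2))⟩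

theorem ideal_le_balanced : ideal k ≤ balanced k :=
  idealGen_le rels_subset_balanced isPathIdeal_balanced

theorem pvec_not_mem_ideal {x y : Bool} (h : x ≠ y) : pvec k (pathOf [x, y]) ∉ ideal k := by
  intro hmem
  have := (mem_balanced.1 (ideal_le_balanced hmem)).2
  cases x <;> cases y <;> simp_all [pvec_pathOf_apply]

variable (k) in
def admissibleIdeal : AdmissibleIdeal k twoLoops where
  I := ideal k
  lmul_mem p _ hx := (isPathIdeal_idealGen _ _ _ p _ hx).1
  rmul_mem p _ hx := (isPathIdeal_idealGen _ _ _ p _ hx).2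
  bound := 3
  two_le_bound := by norm_num
  pow_le := pvec_mem_of_three_le_length
  le_sq x hx := (Finsupp.mem_supported k x).1 (mem_balanced.1 (ideal_le_balanced hx)).1

theorem ne_of_pvec_not_mem {x y : Bool} (h : pvec k (pathOf [x, y]) ∉ ideal k) : x ≠ y := by
  rintro rfl
  exact h (pvec_sq_mem x)

variable (k) in
def specialBiserial : SpecialBiserial k twoLoops where
  toAdmissibleIdeal := admissibleIdeal k
  src_card _ := (Fintype.card_subtype_le _).trans (by simp)
  tgt_card _ := (Fintype.card_subtype_le _).trans (by simp)
  unique_succ a b c _ _ hb hc := by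
    have := ne_of_pvec_not_mem hb
    have := ne_of_pvec_not_mem hc
    cases a <;> cases b <;> cases c <;> simp_all
  unique_pred a b c _ _ hb hc := by
    have := ne_of_pvec_not_mem hb
    have := ne_of_pvec_not_mem hc
    cases a <;> cases b <;> cases c <;> simp_all

variable (k) in
def commRel : BinRel (admissibleIdeal k) where
  s := ()
  t := ()
  u := pathOf [false, true]
  v := pathOf [true, false]
  coef := 1
  coef_ne := one_ne_zero
  u_ne_v h := by simpa using pathOf_injective h
  u_not_mem := pvec_not_mem_ideal (by decide)
  v_not_mem := pvec_not_mem_ideal (by decide)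
  rel_mem := by
    rw [one_smul]
    exact pvec_sub_pvec_swap_mem false true

theorem generates : Generates (admissibleIdeal k) {commRel k} := by
  refine ⟨{sigmaOf [false, false], sigmaOf [true, true]}, ?_, ?_⟩
  · rintro s (rfl | rfl) <;> exact pvec_sq_mem _
  · show idealGen k twoLoops (rels k) = _
    simp only [rels, commRel, Set.image_insert_eq, Set.image_singleton, one_smul,
      Set.insert_union, Set.singleton_union]
    rfl

theorem numComponents_eq_one : numComponents twoLoops = 1 := by
  simp [numComponents]

theorem isSpanningTree_empty : IsSpanningTree twoLoops ∅ :=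
  ⟨fun _ _ => rfl, by simp⟩

theorem relators_eq_commutator :
    (FreeGroup.of '' (∅ : Set twoLoops.A) ∪
      (fun r : BinRel (admissibleIdeal k) => pathWord twoLoops r.u * (pathWord twoLoops r.v)⁻¹) ''
        {commRel k}) = {⁅FreeGroup.of false, FreeGroup.of true⁆} := by
  simp [commRel, pathWord, arrows_pathOf, commutatorElement_def, mul_assoc]

variable (k) in
def pi1MulEquiv : pi1 (admissibleIdeal k) ∅ {commRel k} ≃* Multiplicative (ℤ × ℤ) :=
  (QuotientGroup.quotientMulEquivOfEq
    (congrArg Subgroup.normalClosure relators_eq_commutator)).trans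
      FreeGroup.commutatorQuotientEquiv

end twoLoops

/-- there exists a non-triangular special biserial bound quiver whose
fundamental group is isomorphic to `ℤ × ℤ`; in particular the fundamental group of a
special biserial bound quiver need not be free. -/
theorem stmt17 (k : Type) [Field k] :
    ∃ (Q : FQuiver) (SB : SpecialBiserial k Q)
      (R : Set (BinRel SB.toAdmissibleIdeal)) (T : Set Q.A),
      Generates SB.toAdmissibleIdeal R ∧
      numComponents Q = 1 ∧ IsSpanningTree Q T ∧
      (∃ (x : Q.V) (p : Path Q x x), p.length ≠ 0) ∧
      Nonempty (pi1 SB.toAdmissibleIdeal T R ≃* Multiplicative (ℤ × ℤ)) ∧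
      ∀ ι : Type, ¬ Nonempty (pi1 SB.toAdmissibleIdeal T R ≃* FreeGroup ι) :=
  ⟨twoLoops, twoLoops.specialBiserial k, {twoLoops.commRel k}, ∅, twoLoops.generates,
    twoLoops.numComponents_eq_one, twoLoops.isSpanningTree_empty,
    ⟨(), twoLoops.pathOf [false], one_ne_zero⟩, ⟨twoLoops.pi1MulEquiv k⟩,
    fun ι ⟨e⟩ => not_nonempty_intProd_mulEquiv_freeGroup ι ⟨(twoLoops.pi1MulEquiv k).symm.trans e⟩⟩

end FQuiver
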